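/- arXiv:1907.07268 — 4 statements merged into one kernel-verified Lean document; each statement's English description precedes it below -/
import Mathlib

section
/- Fix integers k ≥ 1 and s ≥ 0 and a partition μ. For an integer n ≥ |μ| + μ_1, let A(n) be the set of pairs (T, ν) where T is a standard Young tableau of shape μ[n] with des(T) ≤ k − 1, ν is a partition with at most k − des(T) − 1 parts, each part of size at most n − k, and maj(T) + |ν| = s. Then |A(n)| = |A(n+1)| for every integer n with n > max(2s, s + k) and n ≥ |μ| + μ_1. (This is the combinatorial core of Theorem 1.5(1): for fixed k and homological degree d = 2s, the multiplicity of the irreducible S_n-module indexed by μ[n] in H_d(X_{n,k}) equals |A(n)|, so these multiplicities stabilize.) -/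
/-!
Filling the new box `(0, n - |μ|)` at the end of the first row of `μ[n]` with `n + 1` maps
`A(n)` into `A(n + 1)` without changing the descent set. It is onto because in every
`(T, ν) ∈ A(n + 1)` the entry `n + 1` already sits in that box: every descent is at most
`maj T ≤ s`, so the rows of the entries `s + 1, …, n + 1` weakly decrease and these entries lie in
distinct columns. Were `n + 1` below the first row, they would all lie in the `μ₁` columns of `μ`,
whereas `n + 1 - s > (n + 1) / 2 ≥ μ₁`. Since `n > s + k`, the bound `ν_i ≤ n - k` follows from
`|ν| ≤ s` on both sides.
-/

/-- The cells of the padded partition `μ[n] = (n - |μ|, μ₁, μ₂, …)`: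
the first row has `n - |μ|` boxes, and row `i+1` is row `i` of `μ`. -/
def paddedCells (μ : YoungDiagram) (n : ℕ) : Finset (ℕ × ℕ) :=
  ((Finset.range (n - μ.card)).image fun j => ((0 : ℕ), j)) ∪
    (μ.cells.image fun c => (c.1 + 1, c.2))

/-- `T` is a standard Young tableau filling of the cell set `cells`:
it restricts to a bijection from the cells onto `{1, …, #cells}`,
is strictly increasing along rows and down columns, and is `0` off the cells. -/
structure IsSYT (cells : Finset (ℕ × ℕ)) (T : ℕ × ℕ → ℕ) : Prop where
  bijOn : Set.BijOn T ↑cells (Set.Icc 1 cells.card)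
  row_strict : ∀ c1 ∈ cells, ∀ c2 ∈ cells, c1.1 = c2.1 → c1.2 < c2.2 → T c1 < T c2
  col_strict : ∀ c1 ∈ cells, ∀ c2 ∈ cells, c1.2 = c2.2 → c1.1 < c2.1 → T c1 < T c2
  zeros : ∀ c, c ∉ cells → T c = 0

open Classical in
/-- The descent set of a filling: those `i` such that `i` appears in a row strictly
above (smaller row index than) the row containing `i + 1`. -/
noncomputable def descents (cells : Finset (ℕ × ℕ)) (T : ℕ × ℕ → ℕ) : Finset ℕ :=
  (Finset.range (cells.card + 1)).filter fun i =>
    ∃ c1 ∈ cells, ∃ c2 ∈ cells, T c1 = i ∧ T c2 = i + 1 ∧ c1.1 < c2.1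

/-- `des T`, the number of descents. -/
noncomputable def desN (cells : Finset (ℕ × ℕ)) (T : ℕ × ℕ → ℕ) : ℕ :=
  (descents cells T).card

/-- `maj T`, the sum of the descents. -/
noncomputable def majN (cells : Finset (ℕ × ℕ)) (T : ℕ × ℕ → ℕ) : ℕ :=
  ∑ i ∈ descents cells T, i

/-- The set `A(n)` of pairs `(T, ν)` where `T` is a standard Young tableau of
shape `μ[n]` with `des T ≤ k - 1`, and `ν` is a partition (encoded as an antitone
function `ℕ → ℕ` listing its parts) with at most `k - des T - 1` parts, each part
at most `n - k`, such that `maj T + |ν| = s`. -/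
def setA (μ : YoungDiagram) (k s n : ℕ) : Set ((ℕ × ℕ → ℕ) × (ℕ → ℕ)) :=
  { Tν | IsSYT (paddedCells μ n) Tν.1 ∧
      desN (paddedCells μ n) Tν.1 ≤ k - 1 ∧
      Antitone Tν.2 ∧
      (∀ i, k - desN (paddedCells μ n) Tν.1 - 1 ≤ i → Tν.2 i = 0) ∧
      (∀ i, Tν.2 i ≤ n - k) ∧
      majN (paddedCells μ n) Tν.1 + ∑ i ∈ Finset.range k, Tν.2 i = s }

open Finset Function

namespace IsSYT

variable {cells : Finset (ℕ × ℕ)} {T : ℕ × ℕ → ℕ}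

theorem one_le (hT : IsSYT cells T) {c : ℕ × ℕ} (hc : c ∈ cells) : 1 ≤ T c :=
  (hT.bijOn.mapsTo hc).1

theorem le_card (hT : IsSYT cells T) {c : ℕ × ℕ} (hc : c ∈ cells) : T c ≤ #cells :=
  (hT.bijOn.mapsTo hc).2

theorem exists_apply_eq (hT : IsSYT cells T) {v : ℕ} (h₁ : 1 ≤ v) (h₂ : v ≤ #cells) :
    ∃ c ∈ cells, T c = v :=
  hT.bijOn.surjOn ⟨h₁, h₂⟩

theorem eq_of_apply_eq (hT : IsSYT cells T) {c c' : ℕ × ℕ} (hc : c ∈ cells) (hc' : c' ∈ cells)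
    (h : T c = T c') : c = c' :=
  hT.bijOn.injOn hc hc' h

theorem mem_descents_iff (hT : IsSYT cells T) {i : ℕ} :
    i ∈ descents cells T ↔
      ∃ c₁ ∈ cells, ∃ c₂ ∈ cells, T c₁ = i ∧ T c₂ = i + 1 ∧ c₁.1 < c₂.1 := by
  simp only [descents, mem_filter, mem_range, and_iff_right_iff_imp]
  rintro ⟨-, -, c₂, hc₂, -, h, -⟩
  have := hT.le_card hc₂
  omega

variable {a : ℕ} (hT : IsSYT cells T) (hdes : ∀ i ∈ descents cells T, i < a)
include hT hdes

theorem fst_le_of_forall_descents_lt {c c' : ℕ × ℕ} (hc : c ∈ cells) (hc' : c' ∈ cells)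
    (ha : a ≤ T c) (hle : T c ≤ T c') : c'.1 ≤ c.1 := by
  obtain ⟨d, hd⟩ := Nat.exists_eq_add_of_le hle
  induction d generalizing c' with
  | zero => rw [hT.eq_of_apply_eq hc' hc hd]
  | succ d ih =>
    obtain ⟨c'', hc'', hv⟩ := hT.exists_apply_eq (v := T c + d)
      (by have := hT.one_le hc; omega) (by have := hT.le_card hc'; omega)
    have hstep : c'.1 ≤ c''.1 := by
      by_contra! h
      have := hdes _ (hT.mem_descents_iff.2 ⟨c'', hc'', c', hc', hv, by omega, h⟩)
      omega
    exact hstep.trans (ih hc'' (by omega) hv)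

theorem injOn_snd_of_forall_descents_lt :
    Set.InjOn Prod.snd ((cells.filter fun c => a ≤ T c : Finset (ℕ × ℕ)) : Set (ℕ × ℕ)) := by
  intro c hc c' hc' hcol
  simp only [coe_filter, Set.mem_ofPred_eq] at hc hc'
  wlog hle : T c ≤ T c' generalizing c c'
  · exact (this hcol.symm hc' hc (by omega)).symm
  have hrow := hT.fst_le_of_forall_descents_lt hdes hc.1 hc'.1 hc.2 hle
  rcases hrow.lt_or_eq with hlt | heq
  · have := hT.col_strict c' hc'.1 c hc.1 hcol.symm hlt
    omega
  · exact Prod.ext heq.symm hcol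

/-- `#cells + 1 - a` is the number of entries `≥ a`. -/
theorem card_add_one_sub_le_of_forall_descents_lt (ha : 1 ≤ a) {L : ℕ}
    (hL : ∀ c ∈ cells, a ≤ T c → c.2 < L) : #cells + 1 - a ≤ L :=
  calc #cells + 1 - a = #(Icc a #cells) := by simp
    _ ≤ #(cells.filter fun c => a ≤ T c) :=
      card_le_card_of_surjOn T fun v hv => by
        simp only [coe_Icc, Set.mem_Icc] at hv
        obtain ⟨c, hc, rfl⟩ := hT.exists_apply_eq (by omega) hv.2
        exact ⟨c, by simpa using ⟨hc, hv.1⟩, rfl⟩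
    _ ≤ #(range L) :=
      card_le_card_of_injOn Prod.snd (fun c hc => by
        simp only [coe_filter, Set.mem_ofPred_eq] at hc
        simpa using hL c hc.1 hc.2) (hT.injOn_snd_of_forall_descents_lt hdes)
    _ = L := card_range L

end IsSYT

section InsertCorner

variable {cells : Finset (ℕ × ℕ)} {T : ℕ × ℕ → ℕ} {w : ℕ × ℕ} {N : ℕ}

theorem isSYT_insert_update_iff (hN : #cells = N) (hw : w ∉ cells)
    (hrow : ∀ c ∈ cells, c.1 = w.1 → c.2 < w.2) (hcol : ∀ c ∈ cells, c.2 = w.2 → c.1 < w.1)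
    (hTw : T w = 0) :
    IsSYT (insert w cells) (update T w (N + 1)) ↔ IsSYT cells T := by
  have heq : ∀ c ∈ cells, update T w (N + 1) c = T c :=
    fun c hc => update_of_ne (hc.ne_of_notMem hw) _ _
  have hbij : Set.BijOn (update T w (N + 1)) ↑(insert w cells) (Set.Icc 1 #(insert w cells)) ↔
      Set.BijOn T ↑cells (Set.Icc 1 #cells) := by
    have := Set.BijOn.insert_iff (f := update T w (N + 1)) (t := Set.Icc 1 N)
      (mem_coe.not.2 hw) (by simp)
    rw [update_self, Set.insert_Icc_right_eq_Icc_add_one (by omega)] at this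
    rw [coe_insert, card_insert_of_notMem hw, hN, this]
    exact Set.EqOn.bijOn_iff fun c hc => heq c hc
  constructor
  · intro h
    refine ⟨hbij.1 h.bijOn, fun c₁ h₁ c₂ h₂ => ?_, fun c₁ h₁ c₂ h₂ => ?_, fun c hc => ?_⟩
    · rw [← heq c₁ h₁, ← heq c₂ h₂]
      exact h.row_strict c₁ (mem_insert_of_mem h₁) c₂ (mem_insert_of_mem h₂)
    · rw [← heq c₁ h₁, ← heq c₂ h₂]
      exact h.col_strict c₁ (mem_insert_of_mem h₁) c₂ (mem_insert_of_mem h₂)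
    · by_cases hcw : c = w
      · rw [hcw, hTw]
      · rw [← update_of_ne hcw (N + 1) T]
        exact h.zeros c (by simp [hcw, hc])
  · intro h
    have hlt : ∀ c ∈ cells, update T w (N + 1) c < update T w (N + 1) w := fun c hc => by
      rw [heq c hc, update_self]
      have := h.le_card hc
      omega
    refine ⟨hbij.2 h.bijOn, fun c₁ h₁ c₂ h₂ hr hc => ?_, fun c₁ h₁ c₂ h₂ hc hr => ?_,
      fun c hc => ?_⟩
    · rcases mem_insert.1 h₁ with h₁ | h₁ <;> rcases mem_insert.1 h₂ with h₂ | h₂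
      · subst c₁ c₂
        omega
      · subst c₁
        have := hrow c₂ h₂ hr.symm
        omega
      · subst c₂
        exact hlt c₁ h₁
      · rw [heq c₁ h₁, heq c₂ h₂]
        exact h.row_strict c₁ h₁ c₂ h₂ hr hc
    · rcases mem_insert.1 h₁ with h₁ | h₁ <;> rcases mem_insert.1 h₂ with h₂ | h₂
      · subst c₁ c₂
        omega
      · subst c₁
        have := hcol c₂ h₂ hc.symm
        omega
      · subst c₂
        exact hlt c₁ h₁
      · rw [heq c₁ h₁, heq c₂ h₂]
        exact h.col_strict c₁ h₁ c₂ h₂ hc hr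
    · rw [mem_insert, not_or] at hc
      rw [update_of_ne hc.1]
      exact h.zeros c hc.2

theorem descents_insert_update (hT : IsSYT cells T) (hN : #cells = N) (hw : w ∉ cells)
    (hw₀ : w.1 = 0) :
    descents (insert w cells) (update T w (N + 1)) = descents cells T := by
  have heq : ∀ c ∈ cells, update T w (N + 1) c = T c :=
    fun c hc => update_of_ne (hc.ne_of_notMem hw) _ _
  ext i
  rw [hT.mem_descents_iff]
  simp only [descents, mem_filter, mem_range, mem_insert, card_insert_of_notMem hw, hN]
  constructor
  · rintro ⟨-, c₁, h₁, c₂, h₂, e₁, e₂, hlt⟩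
    rcases h₂ with rfl | h₂
    · omega
    rw [heq c₂ h₂] at e₂
    rcases h₁ with rfl | h₁
    · rw [update_self] at e₁
      have := hT.le_card h₂
      omega
    · exact ⟨c₁, h₁, c₂, h₂, heq c₁ h₁ ▸ e₁, e₂, hlt⟩
  · rintro ⟨c₁, h₁, c₂, h₂, e₁, e₂, hlt⟩
    have := hT.le_card h₂
    exact ⟨by omega, c₁, Or.inr h₁, c₂, Or.inr h₂, by rwa [heq c₁ h₁], by rwa [heq c₂ h₂], hlt⟩

end InsertCorner

section PaddedCells

variable {μ : YoungDiagram} {n : ℕ}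

theorem mem_paddedCells {c : ℕ × ℕ} :
    c ∈ paddedCells μ n ↔ (c.1 = 0 ∧ c.2 < n - μ.card) ∨ (0 < c.1 ∧ (c.1 - 1, c.2) ∈ μ) := by
  obtain ⟨a, b⟩ := c
  simp only [paddedCells, mem_union, mem_image, mem_range, YoungDiagram.mem_cells, Prod.mk.injEq]
  constructor
  · rintro (⟨j, hj, h0, rfl⟩ | ⟨⟨x, y⟩, hxy, rfl, rfl⟩)
    · exact Or.inl ⟨h0.symm, hj⟩
    · exact Or.inr ⟨x.succ_pos, by simpa using hxy⟩
  · rintro (⟨rfl, hb⟩ | ⟨hpos, hmem⟩)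
    · exact Or.inl ⟨b, hb, rfl, rfl⟩
    · exact Or.inr ⟨(a - 1, b), hmem, by omega, rfl⟩

theorem card_paddedCells (h : μ.card ≤ n) : #(paddedCells μ n) = n := by
  rw [paddedCells, card_union_of_disjoint,
    card_image_of_injective _ fun x y hxy => by simpa using hxy,
    card_image_of_injective _ fun x y hxy => by simpa [Prod.ext_iff] using hxy, card_range]
  · change n - μ.card + μ.card = n
    omega
  · rw [disjoint_left]
    intro _ h₁ h₂
    obtain ⟨j, -, rfl⟩ := mem_image.1 h₁
    obtain ⟨x, -, h⟩ := mem_image.1 h₂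
    simp [Prod.ext_iff] at h

theorem paddedCells_succ (h : μ.card ≤ n) :
    paddedCells μ (n + 1) = insert (0, n - μ.card) (paddedCells μ n) := by
  ext ⟨a, b⟩
  simp only [mem_paddedCells, mem_insert, Prod.mk.injEq]
  by_cases hm : (a - 1, b) ∈ μ <;> simp only [hm, and_true, and_false, or_false] <;> omega

theorem notMem_paddedCells : ((0 : ℕ), n - μ.card) ∉ paddedCells μ n := by
  simp [mem_paddedCells]

theorem snd_lt_rowLen_of_mem_paddedCells {c : ℕ × ℕ} (hc : c ∈ paddedCells μ n) (h : 0 < c.1) :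
    c.2 < μ.rowLen 0 := by
  rcases mem_paddedCells.1 hc with ⟨h', _⟩ | ⟨_, hm⟩
  · omega
  · exact (YoungDiagram.mem_iff_lt_rowLen.mp hm).trans_le (μ.rowLen_anti 0 _ (Nat.zero_le _))

theorem YoungDiagram.rowLen_le_card (μ : YoungDiagram) (i : ℕ) : μ.rowLen i ≤ μ.card := by
  rw [μ.rowLen_eq_card]
  exact card_filter_le _ _

theorem IsSYT.apply_end_first_row_eq {T : ℕ × ℕ → ℕ} {s : ℕ} (hT : IsSYT (paddedCells μ n) T)
    (hmaj : majN (paddedCells μ n) T ≤ s) (hs : 2 * s < n) (hμ : μ.card + μ.rowLen 0 ≤ n) :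
    T (0, n - μ.card - 1) = n := by
  have hcard := card_paddedCells (μ := μ) (n := n) (by omega)
  have hdes : ∀ i ∈ descents (paddedCells μ n) T, i < s + 1 := fun i hi =>
    Nat.lt_succ_of_le ((single_le_sum (f := fun i => i) (fun _ _ => Nat.zero_le _) hi).trans hmaj)
  obtain ⟨c, hc, hTc⟩ := hT.exists_apply_eq (v := n) (by omega) hcard.ge
  have hrow : c.1 = 0 := by
    by_contra h
    have := hT.card_add_one_sub_le_of_forall_descents_lt hdes (Nat.succ_pos s) (L := μ.rowLen 0)
      fun c' hc' ha => snd_lt_rowLen_of_mem_paddedCells hc' <| Nat.lt_of_lt_of_le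
        (Nat.pos_of_ne_zero h) (hT.fst_le_of_forall_descents_lt hdes hc' hc ha
          (hTc ▸ hcard ▸ hT.le_card hc'))
    have := μ.rowLen_le_card 0
    omega
  have hcol : c.2 = n - μ.card - 1 := by
    have hlt : c.2 < n - μ.card := by simpa [hrow] using mem_paddedCells.1 hc
    by_contra hne
    have hend : ((0 : ℕ), n - μ.card - 1) ∈ paddedCells μ n :=
      mem_paddedCells.2 (Or.inl ⟨rfl, by omega⟩)
    have := hT.row_strict c hc _ hend hrow (by simp only; omega)
    have := hT.le_card hend
    omega
  rwa [show ((0 : ℕ), n - μ.card - 1) = c from Prod.ext hrow.symm hcol.symm]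

end PaddedCells

section SetA

variable {μ : YoungDiagram} {k s n : ℕ}

theorem mem_setA_iff (h : s + k ≤ n) {Tν : (ℕ × ℕ → ℕ) × (ℕ → ℕ)} :
    Tν ∈ setA μ k s n ↔ IsSYT (paddedCells μ n) Tν.1 ∧
      desN (paddedCells μ n) Tν.1 ≤ k - 1 ∧
      Antitone Tν.2 ∧
      (∀ i, k - desN (paddedCells μ n) Tν.1 - 1 ≤ i → Tν.2 i = 0) ∧
      majN (paddedCells μ n) Tν.1 + ∑ i ∈ range k, Tν.2 i = s := by
  simp only [setA, Set.mem_ofPred_eq]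
  refine ⟨fun ⟨h₁, h₂, h₃, h₄, _, h₆⟩ => ⟨h₁, h₂, h₃, h₄, h₆⟩,
    fun ⟨h₁, h₂, h₃, h₄, h₆⟩ => ⟨h₁, h₂, h₃, h₄, fun i => ?_, h₆⟩⟩
  by_cases hik : i < k
  · have := single_le_sum (fun j _ => Nat.zero_le (Tν.2 j)) (mem_range.2 hik)
    omega
  · rw [h₄ i (by omega)]
    exact Nat.zero_le _

theorem update_mem_setA_succ_iff (hsk : s + k < n) (hμ : μ.card + μ.rowLen 0 ≤ n)
    {T : ℕ × ℕ → ℕ} {ν : ℕ → ℕ} (hT₀ : T (0, n - μ.card) = 0) :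
    (update T (0, n - μ.card) (n + 1), ν) ∈ setA μ k s (n + 1) ↔ (T, ν) ∈ setA μ k s n := by
  have hcard := card_paddedCells (μ := μ) (n := n) (by omega)
  have hw := notMem_paddedCells (μ := μ) (n := n)
  rw [mem_setA_iff (by omega), mem_setA_iff (by omega), paddedCells_succ (by omega),
    isSYT_insert_update_iff hcard hw (fun c hc h => by simpa [h] using mem_paddedCells.1 hc)
      (fun c hc h => by
        dsimp only at h
        rcases mem_paddedCells.1 hc with ⟨-, h'⟩ | ⟨h₀, -⟩
        · omega
        · have := snd_lt_rowLen_of_mem_paddedCells hc h₀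
          omega) hT₀]
  refine and_congr_right fun hT => ?_
  simp only [desN, majN, descents_insert_update hT hcard hw rfl]

end SetA

theorem stmt0_general (k s : ℕ) (μ : YoungDiagram) (n : ℕ)
    (hn1 : max (2 * s) (s + k) < n) (hn2 : μ.card + μ.rowLen 0 ≤ n) :
    (setA μ k s n).ncard = (setA μ k s (n + 1)).ncard := by
  rw [max_lt_iff] at hn1
  set w : ℕ × ℕ := (0, n - μ.card)
  have hzero : ∀ p ∈ setA μ k s n, p.1 w = 0 := fun p hp => hp.1.zeros w notMem_paddedCells
  have hmax : ∀ p ∈ setA μ k s (n + 1), p.1 w = n + 1 := fun p hp => by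
    have h := hp.1.apply_end_first_row_eq (s := s) (by have := hp.2.2.2.2.2; omega) (by omega)
      (by omega)
    rwa [show n + 1 - μ.card - 1 = n - μ.card by omega] at h
  refine Set.BijOn.ncard_eq (f := fun p => (update p.1 w (n + 1), p.2))
    (Set.InvOn.bijOn (f' := fun p => (update p.1 w 0, p.2)) ⟨fun p hp => ?_, fun p hp => ?_⟩
      (fun p hp => ?_) fun p hp => ?_)
  · simp only [update_idem, ← hzero p hp, update_eq_self]
  · simp only [update_idem, ← hmax p hp, update_eq_self]
  · exact (update_mem_setA_succ_iff (by omega) hn2 (hzero p hp)).2 hp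
  · refine (update_mem_setA_succ_iff (by omega) hn2 (update_self _ _ _)).1 ?_
    have hfix : update p.1 w (n + 1) = p.1 := hmax p hp ▸ update_eq_self w p.1
    rwa [update_idem, hfix]

/-- for fixed `k ≥ 1`, `s ≥ 0` and a partition `μ`,
`|A(n)| = |A(n+1)|` for every `n > max (2s) (s+k)` with `n ≥ |μ| + μ₁`. -/
theorem stmt0 (k s : ℕ) (hk : 1 ≤ k) (μ : YoungDiagram) (n : ℕ)
    (hn1 : max (2 * s) (s + k) < n) (hn2 : μ.card + μ.rowLen 0 ≤ n) :
    (setA μ k s n).ncard = (setA μ k s (n + 1)).ncard :=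
  stmt0_general k s μ n hn1 hn2
end

section
/- Let k ≤ n ≤ n' be positive integers and let f : Fin n → Fin n' be an injection. Then the algebra map φ_f sends the ideal I_{n',k} ⊆ ℚ[x_1, …, x_{n'}] into the ideal I_{n,k} ⊆ ℚ[x_1, …, x_n], i.e., φ_f(I_{n',k}) ⊆ I_{n,k}. (This is the key step showing that the degree pieces of the ideals I_{n,k} form a co-FI submodule for fixed k.) -/
/-- The ideal `I_{n,k} ⊆ ℚ[x_1, …, x_n]` generated by `x_1^k, …, x_n^k` together
with the elementary symmetric polynomials `e_n, e_{n-1}, …, e_{n-k+1}`. -/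
noncomputable def Idl (n k : ℕ) : Ideal (MvPolynomial (Fin n) ℚ) :=
  Ideal.span ((Set.range fun i : Fin n => MvPolynomial.X i ^ k) ∪
    ((fun d => MvPolynomial.esymm (Fin n) ℚ d) '' {d : ℕ | n - k + 1 ≤ d ∧ d ≤ n}))

/-- For an injection `f : Fin n → Fin n'`, the ℚ-algebra homomorphism
`φ_f : ℚ[x_1, …, x_{n'}] → ℚ[x_1, …, x_n]` with `φ_f(x_j) = x_i` if `j = f i`
and `φ_f(x_j) = 0` if `j` is not in the image of `f`. -/
noncomputable def phiMap {n n' : ℕ} (f : Fin n → Fin n') :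
    MvPolynomial (Fin n') ℚ →ₐ[ℚ] MvPolynomial (Fin n) ℚ :=
  MvPolynomial.aeval fun j : Fin n' =>
    if h : ∃ i, f i = j then MvPolynomial.X h.choose else 0

/-!
It suffices to check the generators of `I_{n',k}`. For `j` outside the image of `f`, `φ_f` kills
`x_j^k` (as `k ≥ 1`), and it sends `x_{f i}^k` to `x_i^k`. It sends `e_d` to `e_d`, since every
`d`-subset of `Fin n'` meeting the complement of the image of `f` contributes a vanishing
monomial; and `d ≥ n' - k + 1 ≥ n - k + 1`, where `e_d = 0` in `n` variables once `d > n`.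
-/

open MvPolynomial Finset

namespace MvPolynomial

variable {σ τ R S : Type*} [CommSemiring R] [CommSemiring S] [Algebra R S]
  [Fintype σ] [Fintype τ]

theorem map_esymm_of_map_X_eq_zero (φ : MvPolynomial τ R →ₐ[R] S) (e : σ ↪ τ)
    (hφ : ∀ j ∉ Set.range e, φ (X j) = 0) (d : ℕ) :
    φ (esymm τ R d) = aeval (fun i => φ (X (e i))) (esymm σ R d) := by
  classical
  have hvanish : ∀ t ∈ powersetCard d univ, t ∉ powersetCard d (univ.map e) →
      ∏ j ∈ t, φ (X j) = 0 := by
    intro t ht hnt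
    obtain ⟨j, hjt, hj⟩ := not_subset.mp fun hsub => hnt (mem_powersetCard.mpr
      ⟨hsub, (mem_powersetCard.mp ht).2⟩)
    exact prod_eq_zero hjt (hφ j fun ⟨i, hi⟩ => hj (hi ▸ mem_map_of_mem e (mem_univ i)))
  simp only [esymm, map_sum, map_prod, aeval_X]
  rw [← sum_subset (powersetCard_mono (subset_univ _)) hvanish, powersetCard_map, sum_map]
  exact sum_congr rfl fun s _ => prod_map s e _

theorem esymm_eq_zero_of_card_lt {d : ℕ} (hd : Fintype.card σ < d) : esymm σ R d = 0 := by
  rw [esymm, powersetCard_eq_empty.mpr (by simpa using hd), sum_empty]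

end MvPolynomial

section phiMap

variable {n n' : ℕ} {f : Fin n → Fin n'}

theorem phiMap_X_apply (hf : Function.Injective f) (i : Fin n) :
    phiMap f (X (f i)) = X i := by
  have hi : ∃ i', f i' = f i := ⟨i, rfl⟩
  rw [phiMap, aeval_X, dif_pos hi, hf hi.choose_spec]

theorem phiMap_X_of_notMem_range {j : Fin n'} (hj : j ∉ Set.range f) : phiMap f (X j) = 0 := by
  rw [phiMap, aeval_X]
  exact dif_neg hj

theorem phiMap_esymm (hf : Function.Injective f) (d : ℕ) :
    phiMap f (esymm (Fin n') ℚ d) = esymm (Fin n) ℚ d := by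
  rw [map_esymm_of_map_X_eq_zero (phiMap f) ⟨f, hf⟩ fun _ => phiMap_X_of_notMem_range]
  simp only [Function.Embedding.coeFn_mk, phiMap_X_apply hf, aeval_X_left_apply]

end phiMap

theorem stmt7_general (k n n' : ℕ) (hk : 1 ≤ k) (hnn' : n ≤ n')
    (f : Fin n → Fin n') (hf : Function.Injective f) :
    ∀ P ∈ Idl n' k, phiMap f P ∈ Idl n k := by
  suffices Idl n' k ≤ (Idl n k).comap (phiMap f) from fun P hP => this hP
  refine Ideal.span_le.mpr ?_
  rintro _ (⟨j, rfl⟩ | ⟨d, ⟨hd, -⟩, rfl⟩)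
  · by_cases hj : j ∈ Set.range f
    · obtain ⟨i, rfl⟩ := hj
      rw [SetLike.mem_coe, Ideal.mem_comap, map_pow, phiMap_X_apply hf]
      exact Ideal.subset_span (Or.inl ⟨i, rfl⟩)
    · rw [SetLike.mem_coe, Ideal.mem_comap, map_pow, phiMap_X_of_notMem_range hj,
        zero_pow (by omega)]
      exact zero_mem _
  · rw [SetLike.mem_coe, Ideal.mem_comap, phiMap_esymm hf]
    by_cases hdn : d ≤ n
    · exact Ideal.subset_span (Or.inr ⟨d, ⟨by omega, hdn⟩, rfl⟩)
    · rw [esymm_eq_zero_of_card_lt (by simpa using hdn)]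
      exact zero_mem _

/-- for `1 ≤ k ≤ n ≤ n'` and an injection `f : Fin n → Fin n'`,
the map `φ_f` sends the ideal `I_{n',k}` into the ideal `I_{n,k}`. -/
theorem stmt7 (k n n' : ℕ) (hk : 1 ≤ k) (hkn : k ≤ n) (hnn' : n ≤ n')
    (f : Fin n → Fin n') (hf : Function.Injective f) :
    ∀ P ∈ Idl n' k, phiMap f P ∈ Idl n k :=
  stmt7_general k n n' hk hnn' f hf
end

section
/- Let 0 ≤ m < n ≤ p be integers and let f : {1,…,n} → {1,…,p} be an injection. If (ℓ_1, …, ℓ_n) is an n-tuple of one-dimensional subspaces of ℂ^{n−m} with ℓ_1 + ⋯ + ℓ_n = ℂ^{n−m}, then the p-tuple ν_f(ℓ_1, …, ℓ_n) = (ℓ''_1, …, ℓ''_p) of one-dimensional subspaces of ℂ^{p−m} satisfies ℓ''_1 + ⋯ + ℓ''_p = ℂ^{p−m}. (That is, ν_f maps the space X_{n,n−m} of spanning line configurations into X_{p,p−m}.) -/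
/-- The linear inclusion `ℂ^a → ℂ^b` into the first `a` coordinates. -/
noncomputable def iotaC (a b : ℕ) : (Fin a → ℂ) →ₗ[ℂ] (Fin b → ℂ) where
  toFun v := fun j => if h : (j : ℕ) < a then v ⟨(j : ℕ), h⟩ else 0
  map_add' u v := by funext j; by_cases h : (j : ℕ) < a <;> simp [h]
  map_smul' c v := by funext j; by_cases h : (j : ℕ) < a <;> simp [h]

/-- For `j` not in the image of `f`, `missingRank f j` is the number of elements
smaller than `j` which are not in the image of `f`; so if `j` is the `t`-th
smallest missing element (`t ≥ 1`) then `missingRank f j = t - 1`. -/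
def missingRank {n p : ℕ} (f : Fin n → Fin p) (j : Fin p) : ℕ :=
  (Finset.univ.filter fun j' : Fin p => j' < j ∧ ∀ i, f i ≠ j').card

/-- The map `ν_f` on tuples of subspaces: the `j`-th entry of
`ν_f (ℓ_1, …, ℓ_n)` is `ι(ℓ_i)` if `j = f i` (with `ι : ℂ^{n-m} → ℂ^{p-m}` the
inclusion into the first coordinates), and is the line spanned by the standard
basis vector `e_{t + n - m}` if `j = i_t` is the `t`-th smallest element outside
the image of `f` (all 1-indexed in the mathematical description; here encoded
0-indexed, so the basis vector has 0-based index `(n - m) + missingRank f j`). -/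
noncomputable def nu (m n p : ℕ) (f : Fin n → Fin p)
    (L : Fin n → Submodule ℂ (Fin (n - m) → ℂ)) :
    Fin p → Submodule ℂ (Fin (p - m) → ℂ) := fun j =>
  if h : ∃ i, f i = j then (L h.choose).map (iotaC (n - m) (p - m))
  else Submodule.span ℂ
    {fun a : Fin (p - m) => if (a : ℕ) = (n - m) + missingRank f j then (1 : ℂ) else 0}

/-!
The lines `ι(ℓ_i)` span the image `ι(ℂ^{n-m})`, i.e. the first `n - m` coordinate axes of
`ℂ^{p-m}`. The `p - n` positions outside the image of `f` are ranked `0, …, p - n - 1` by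
`missingRank f`, bijectively, so the added lines are exactly the remaining coordinate axes
`e_{n-m}, …, e_{p-m-1}`. Injectivity of `ι` keeps every `ι(ℓ_i)` one-dimensional.
-/

open Finset

lemma iotaC_injective {a b : ℕ} (hab : a ≤ b) : Function.Injective (iotaC a b) := by
  intro u v huv
  funext i
  simpa [iotaC, i.2] using congrFun huv (Fin.castLE hab i)

lemma iotaC_single {a b : ℕ} (k : Fin b) (hk : (k : ℕ) < a) (c : ℂ) :
    iotaC a b (Pi.single ⟨k, hk⟩ c) = Pi.single k c := by
  funext x
  by_cases hx : (x : ℕ) < a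
  · simp [iotaC, hx, Pi.single_apply, Fin.ext_iff]
  · have hxk : x ≠ k := fun h => hx (h ▸ hk)
    simp [iotaC, hx, hxk]

section missingRank

variable {n p : ℕ} {f : Fin n → Fin p}

lemma card_filter_forall_ne (hf : Function.Injective f) :
    #{j | ∀ i, f i ≠ j} = p - n := by
  classical
  have : ({j | ∀ i, f i ≠ j} : Finset (Fin p)) = (univ.image f)ᶜ := by
    ext j
    simp
  rw [this, card_compl, card_image_of_injective _ hf, card_univ, Fintype.card_fin,
    Fintype.card_fin]

lemma missingRank_lt (hf : Function.Injective f) {j : Fin p} (hj : ∀ i, f i ≠ j) :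
    missingRank f j < p - n := by
  rw [← card_filter_forall_ne hf]
  refine card_lt_card ⟨fun x hx => by simp_all, fun hsub => ?_⟩
  simpa using hsub (by simpa using hj : j ∈ ({j | ∀ i, f i ≠ j} : Finset (Fin p)))

lemma missingRank_lt_missingRank {j₁ j₂ : Fin p} (hj₁ : ∀ i, f i ≠ j₁) (h : j₁ < j₂) :
    missingRank f j₁ < missingRank f j₂ := by
  refine card_lt_card ⟨fun x hx => ?_, fun hsub => ?_⟩
  · simp only [mem_filter, mem_univ, true_and] at hx ⊢
    exact ⟨hx.1.trans h, hx.2⟩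
  · simpa using hsub (by simpa [h] using hj₁ :
      j₁ ∈ ({j' | j' < j₂ ∧ ∀ i, f i ≠ j'} : Finset (Fin p)))

lemma exists_missingRank_eq (hf : Function.Injective f) {t : ℕ} (ht : t < p - n) :
    ∃ j : Fin p, (∀ i, f i ≠ j) ∧ missingRank f j = t := by
  set S : Finset (Fin p) := {j | ∀ i, f i ≠ j} with hS
  have hmono : StrictMonoOn (missingRank f) S := fun j₁ h₁ _ _ h =>
    missingRank_lt_missingRank (by simpa [hS] using h₁) h
  obtain ⟨j, hj, hjt⟩ := surj_on_of_inj_on_of_card_le (fun j _ => missingRank f j)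
    (fun j hj => mem_range.mpr (missingRank_lt hf (by simpa [hS] using hj)))
    (fun j₁ j₂ h₁ h₂ => hmono.injOn h₁ h₂)
    (by rw [card_range, card_filter_forall_ne hf]) t (mem_range.mpr ht)
  exact ⟨j, by simpa [hS] using hj, hjt.symm⟩

end missingRank

section nu

variable {m n p : ℕ} {f : Fin n → Fin p} {L : Fin n → Submodule ℂ (Fin (n - m) → ℂ)}

lemma nu_apply_apply (hf : Function.Injective f) (i : Fin n) :
    nu m n p f L (f i) = (L i).map (iotaC (n - m) (p - m)) := by
  have h : ∃ i', f i' = f i := ⟨i, rfl⟩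
  rw [nu, dif_pos h, hf h.choose_spec]

lemma nu_apply_of_forall_ne {j : Fin p} (hj : ∀ i, f i ≠ j) {k : Fin (p - m)}
    (hk : (k : ℕ) = n - m + missingRank f j) :
    nu m n p f L j = ℂ ∙ Pi.single k 1 := by
  have hgen : (fun a : Fin (p - m) => if (a : ℕ) = n - m + missingRank f j then (1 : ℂ) else 0)
      = Pi.single k 1 := by
    funext a
    simp [Pi.single_apply, ← hk, Fin.ext_iff]
  rw [nu, dif_neg (not_exists.mpr hj), hgen]

lemma finrank_nu (hm : m ≤ n) (hf : Function.Injective f)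
    (hdim : ∀ i, Module.finrank ℂ (L i) = 1) (j : Fin p) :
    Module.finrank ℂ (nu m n p f L j) = 1 := by
  by_cases h : ∃ i, f i = j
  · obtain ⟨i, rfl⟩ := h
    have hmp : n - m ≤ p - m := by have := Fin.le_of_injective f hf; omega
    rw [nu_apply_apply hf, ← hdim i]
    exact (Submodule.equivMapOfInjective _ (iotaC_injective hmp) (L i)).finrank_eq.symm
  · have hj : ∀ i, f i ≠ j := not_exists.mp h
    have hlt : n - m + missingRank f j < p - m := by
      have := missingRank_lt hf hj
      omega
    rw [nu_apply_of_forall_ne hj (k := ⟨_, hlt⟩) rfl]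
    exact finrank_span_singleton (Pi.single_ne_zero_iff.mpr one_ne_zero)

lemma iSup_nu_eq_top (hf : Function.Injective f) (hspan : ⨆ i, L i = ⊤) :
    ⨆ j, nu m n p f L j = ⊤ := by
  have hmp : n - m ≤ p - m := by have := Fin.le_of_injective f hf; omega
  rw [eq_top_iff, ← (Pi.basisFun ℂ (Fin (p - m))).span_eq, Submodule.span_le]
  rintro _ ⟨k, rfl⟩
  rw [Pi.basisFun_apply]
  by_cases hk : (k : ℕ) < n - m
  · have himage : Pi.single k 1 ∈ (⨆ i, L i).map (iotaC (n - m) (p - m)) := by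
      rw [← iotaC_single k hk, hspan]
      exact Submodule.mem_map_of_mem Submodule.mem_top
    rw [Submodule.map_iSup] at himage
    have hle : ⨆ i, (L i).map (iotaC (n - m) (p - m)) ≤ ⨆ j, nu m n p f L j :=
      iSup_le fun i => nu_apply_apply hf i ▸ le_iSup (nu m n p f L) (f i)
    exact hle himage
  · obtain ⟨j, hj, hjt⟩ := exists_missingRank_eq hf (t := k - (n - m)) (by omega)
    refine le_iSup (nu m n p f L) j ?_
    rw [nu_apply_of_forall_ne hj (k := k) (by omega)]
    exact Submodule.mem_span_singleton_self _

end nu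

theorem stmt14_general (m n p : ℕ) (hm : m < n)
    (f : Fin n → Fin p) (hf : Function.Injective f)
    (L : Fin n → Submodule ℂ (Fin (n - m) → ℂ))
    (hdim : ∀ i, Module.finrank ℂ (L i) = 1)
    (hspan : ⨆ i, L i = ⊤) :
    (∀ j, Module.finrank ℂ (nu m n p f L j) = 1) ∧ (⨆ j, nu m n p f L j = ⊤) :=
  ⟨finrank_nu hm.le hf hdim, iSup_nu_eq_top hf hspan⟩

/-- for `0 ≤ m < n ≤ p` and an injection `f`, if
`(ℓ_1, …, ℓ_n)` is a tuple of one-dimensional subspaces of `ℂ^{n-m}` with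
`ℓ_1 + ⋯ + ℓ_n = ℂ^{n-m}`, then `ν_f (ℓ_1, …, ℓ_n)` is a `p`-tuple of
one-dimensional subspaces of `ℂ^{p-m}` with `ℓ''_1 + ⋯ + ℓ''_p = ℂ^{p-m}`. -/
theorem stmt14 (m n p : ℕ) (hm : m < n) (hnp : n ≤ p)
    (f : Fin n → Fin p) (hf : Function.Injective f)
    (L : Fin n → Submodule ℂ (Fin (n - m) → ℂ))
    (hdim : ∀ i, Module.finrank ℂ (L i) = 1)
    (hspan : ⨆ i, L i = ⊤) :
    (∀ j, Module.finrank ℂ (nu m n p f L j) = 1) ∧ (⨆ j, nu m n p f L j = ⊤) :=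
  stmt14_general m n p hm f hf L hdim hspan
end

section
/- Let n ≥ 1 and 0 ≤ k ≤ n−1 be integers. Then, in S(n+1) = ℚ[x_1,…,x_{n+1}] ⊗ Λ(θ_1,…,θ_{n+1}), applying the composition of partial derivatives (∂/∂x_1)(∂/∂x_2)⋯(∂/∂x_n) (acting on the polynomial tensor factor, identity on the exterior factor) to the superspace Vandermonde δ_{n+1, n−k+1} yields (n−k)^k · (n−k)! · Ψ(δ_{n,n−k}), where Ψ : S(n) → S(n+1) is the inclusion induced by the standard coordinate inclusion of {1,…,n} into {1,…,n+1} on both tensor factors. -/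
/-!
In `δ_{n+1,K+1}` the variable `x_{w(n+1)}` carries exponent `0`, so `∂_1 ⋯ ∂_n` kills every
summand whose permutation moves `n+1`. The surviving permutations are the extensions of
`σ ∈ S_n`; for them, differentiating lowers each exponent `min(K, n+1-i)` (`i ≤ n`) by one,
which produces exactly the exponents of `δ_{n,K}`, and the coefficient it creates is
`∏_{i ≤ n} min(K, n+1-i) = K^{n-K} K!`. Both Vandermondes carry the same `n - K` odd variables,
and extending `σ` preserves the sign. Take `K = n - k`.
-/

open scoped TensorProduct

set_option synthInstance.maxHeartbeats 1000000
set_option maxHeartbeats 1000000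

/-- Superspace `S(n) = ℚ[x_1, …, x_n] ⊗ Λ(θ_1, …, θ_n)`. -/
noncomputable abbrev Ssp (n : ℕ) : Type :=
  MvPolynomial (Fin n) ℚ ⊗[ℚ] ExteriorAlgebra ℚ (Fin n → ℚ)

/-- The anticommuting generator `θ_i`, the image of the `i`-th standard basis
vector of `ℚ^n` in the exterior algebra. -/
noncomputable def theta (n : ℕ) (i : Fin n) : ExteriorAlgebra ℚ (Fin n → ℚ) :=
  ExteriorAlgebra.ι ℚ (Pi.single i 1)

/-- The superspace Vandermonde `δ_{n,K} = Σ_{w ∈ S_n} sign(w) ·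
w·(x_1^{a_1} ⋯ x_n^{a_n} ⊗ θ_1 ⋯ θ_r)`, where `r = n - K` and (1-indexed)
`a_i = min (K-1) (n-i)`.  Here `w` acts by `x_i ↦ x_{w i}`, `θ_i ↦ θ_{w i}`, so
the summand is the monomial with exponent `min (K-1) (n-1-(w⁻¹ j))` on `x_j`
(0-indexed) tensored with the ordered product `θ_{w 0} θ_{w 1} ⋯ θ_{w (r-1)}`. -/
noncomputable def sVandermonde (n K : ℕ) : Ssp n :=
  ∑ w : Equiv.Perm (Fin n),
    (((Equiv.Perm.sign w : ℤ) : ℚ)) •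
      ((MvPolynomial.monomial
          (Finsupp.equivFunOnFinite.symm
            fun j : Fin n => min (K - 1) (n - 1 - ((w.symm j : ℕ)))) (1 : ℚ)) ⊗ₜ[ℚ]
        (List.ofFn fun t : Fin n =>
          if (t : ℕ) < n - K then theta n (w t) else 1).prod)

/-- The partial derivative `∂/∂x_i` acting on superspace: the usual partial
derivative on the polynomial factor, the identity on the exterior factor. -/
noncomputable def pderivT (n : ℕ) (i : Fin n) : Module.End ℚ (Ssp n) :=
  LinearMap.rTensor (ExteriorAlgebra ℚ (Fin n → ℚ))
    (MvPolynomial.pderiv i).toLinearMap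

/-- The composite `(∂/∂x_1)(∂/∂x_2)⋯(∂/∂x_n)` acting on `S(n+1)`. -/
noncomputable def Dop (n : ℕ) : Module.End ℚ (Ssp (n + 1)) :=
  (List.ofFn fun i : Fin n => pderivT (n + 1) i.castSucc).prod

/-- The linear inclusion `ℚ^n → ℚ^{n+1}` into the first `n` coordinates. -/
noncomputable def iotaQ (n : ℕ) : (Fin n → ℚ) →ₗ[ℚ] (Fin (n + 1) → ℚ) where
  toFun v := fun j => if h : (j : ℕ) < n then v ⟨(j : ℕ), h⟩ else 0
  map_add' u v := by funext j; by_cases h : (j : ℕ) < n <;> simp [h]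
  map_smul' c v := by funext j; by_cases h : (j : ℕ) < n <;> simp [h]

/-- The inclusion of exterior algebras `Λ(θ_1, …, θ_n) → Λ(θ_1, …, θ_{n+1})`,
`θ_i ↦ θ_i`. -/
noncomputable def extInc (n : ℕ) :
    ExteriorAlgebra ℚ (Fin n → ℚ) →ₐ[ℚ] ExteriorAlgebra ℚ (Fin (n + 1) → ℚ) :=
  ExteriorAlgebra.lift ℚ
    ⟨(ExteriorAlgebra.ι ℚ).comp (iotaQ n), fun v => ExteriorAlgebra.ι_sq_zero _⟩

/-- The inclusion `Ψ : S(n) → S(n+1)`, `x_i ↦ x_i` and `θ_i ↦ θ_i`. -/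
noncomputable def Psi (n : ℕ) : Ssp n →ₗ[ℚ] Ssp (n + 1) :=
  TensorProduct.map
    (MvPolynomial.rename (Fin.castSucc : Fin n → Fin (n + 1)) :
      MvPolynomial (Fin n) ℚ →ₐ[ℚ] MvPolynomial (Fin (n + 1)) ℚ).toLinearMap
    (extInc n).toLinearMap

theorem prod_fin_sub_eq_factorial (a : ℕ) : ∏ j : Fin a, (a - j) = a.factorial := by
  induction a with
  | zero => simp
  | succ a ih => simp [Fin.prod_univ_succ, ih, Nat.factorial_succ]

theorem prod_fin_min_sub_eq_pow_mul_factorial {K n : ℕ} (hK : K ≤ n) :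
    ∏ j : Fin n, min K (n - j) = K ^ (n - K) * K.factorial := by
  obtain ⟨k, rfl⟩ := Nat.exists_eq_add_of_le hK
  clear hK
  induction k with
  | zero =>
    simp only [Nat.add_zero, Nat.sub_self, pow_zero, one_mul]
    rw [← prod_fin_sub_eq_factorial]
    exact Fintype.prod_congr _ _ fun j => min_eq_right (Nat.sub_le _ _)
  | succ k ih =>
    rw [← Nat.add_assoc, Fin.prod_univ_succ]
    simp only [Fin.val_zero, Nat.sub_zero, Fin.val_succ, Nat.add_sub_add_right]
    rw [ih, min_eq_left (by omega), Nat.add_sub_cancel_left,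
      show K + k + 1 - K = k + 1 by omega, pow_succ]
    ring

namespace Equiv.Perm

variable {n : ℕ}

noncomputable def extendLast (σ : Perm (Fin n)) : Perm (Fin (n + 1)) :=
  σ.extendDomain (finSuccAboveEquiv (Fin.last n))

@[simp]
theorem extendLast_castSucc (σ : Perm (Fin n)) (i : Fin n) :
    σ.extendLast i.castSucc = (σ i).castSucc := by
  simpa [extendLast, finSuccAboveEquiv_apply] using
    σ.extendDomain_apply_image (finSuccAboveEquiv (Fin.last n)) i

@[simp]
theorem extendLast_last (σ : Perm (Fin n)) : σ.extendLast (Fin.last n) = Fin.last n :=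
  σ.extendDomain_apply_not_subtype _ (not_not.mpr rfl)

@[simp]
theorem extendLast_symm (σ : Perm (Fin n)) : (extendLast σ).symm = extendLast σ.symm :=
  extendDomain_symm _ _

@[simp]
theorem sign_extendLast (σ : Perm (Fin n)) : sign σ.extendLast = sign σ :=
  sign_extendDomain _ _

theorem extendLast_injective : Function.Injective (extendLast (n := n)) :=
  extendDomainHom_injective _

theorem exists_extendLast_of_apply_last {w : Perm (Fin (n + 1))}
    (hw : w (Fin.last n) = Fin.last n) : ∃ σ : Perm (Fin n), extendLast σ = w := by
  have hp : ∀ j, w j ≠ Fin.last n ↔ j ≠ Fin.last n := fun j => by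
    nth_rw 1 [← hw]; exact w.injective.ne_iff
  refine ⟨(permCongr (finSuccAboveEquiv (Fin.last n))).symm (w.subtypePerm hp),
    Equiv.ext fun j => ?_⟩
  induction j using Fin.lastCases with
  | last => rw [extendLast_last, hw]
  | cast i => simp [finSuccAboveEquiv_apply, finSuccAboveEquiv_symm_apply_last]

end Equiv.Perm

namespace MvPolynomial

variable {R σ : Type*} [CommSemiring R]

theorem prod_ofFn_pderiv_monomial {m : ℕ} (f : Fin m → σ) (hf : Function.Injective f)
    (d : σ →₀ ℕ) (c : R) :
    (List.ofFn fun i => (pderiv (f i)).toLinearMap).prod (monomial d c)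
      = (∏ i, (d (f i) : R)) • monomial (d - ∑ i, Finsupp.single (f i) 1) c := by
  induction m with
  | zero => simp
  | succ m ih =>
    have hrest : (∑ i : Fin m, Finsupp.single (f i.succ) 1) (f 0) = 0 := by
      simp [Finsupp.finsetSum_apply, hf.eq_iff]
    rw [List.ofFn_succ, List.prod_cons, Module.End.mul_apply,
      ih (fun i => f i.succ) (hf.comp (Fin.succ_injective m))]
    simp only [Derivation.coeFn_coe, pderiv_monomial, Finsupp.tsub_apply, hrest, Nat.sub_zero,
      Fin.prod_univ_succ, Fin.sum_univ_succ, tsub_tsub, smul_monomial, smul_eq_mul]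
    rw [add_comm (Finsupp.single _ _)]
    ring_nf

end MvPolynomial

theorem LinearMap.rTensor_list_prod {R M N : Type*} [CommSemiring R] [AddCommMonoid M]
    [Module R M] [AddCommMonoid N] [Module R N] (l : List (Module.End R M)) :
    l.prod.rTensor N = (l.map (rTensor N)).prod :=
  map_list_prod (Module.End.rTensorAlgHom R M N) l

theorem iotaQ_single (n : ℕ) (i : Fin n) :
    iotaQ n (Pi.single i 1) = Pi.single i.castSucc 1 := by
  funext j
  induction j using Fin.lastCases with
  | last => simp [iotaQ, (Fin.castSucc_lt_last i).ne']
  | cast j => simp [iotaQ, Pi.single_apply]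

theorem extInc_theta (n : ℕ) (i : Fin n) : extInc n (theta n i) = theta (n + 1) i.castSucc := by
  simp [extInc, theta, iotaQ_single]

theorem Dop_tmul_monomial (n : ℕ) (d : Fin (n + 1) →₀ ℕ) (c : ℚ)
    (e : ExteriorAlgebra ℚ (Fin (n + 1) → ℚ)) :
    Dop n (MvPolynomial.monomial d c ⊗ₜ e)
      = (∏ i : Fin n, (d i.castSucc : ℚ)) •
        (MvPolynomial.monomial (d - ∑ i : Fin n, Finsupp.single i.castSucc 1) c ⊗ₜ e) := by
  have hDop : Dop n = ((List.ofFn fun i : Fin n =>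
      (MvPolynomial.pderiv (R := ℚ) i.castSucc).toLinearMap).prod).rTensor _ := by
    rw [LinearMap.rTensor_list_prod, List.map_ofFn]
    rfl
  rw [hDop, LinearMap.rTensor_tmul,
    MvPolynomial.prod_ofFn_pderiv_monomial _ (Fin.castSucc_injective n), TensorProduct.smul_tmul']

section Vandermonde

open Equiv.Perm (extendLast sign)

noncomputable def vandermondeExponent (n K : ℕ) (w : Equiv.Perm (Fin n)) : Fin n →₀ ℕ :=
  Finsupp.equivFunOnFinite.symm fun j => min (K - 1) (n - 1 - (w.symm j : ℕ))

noncomputable def thetaWord (n r : ℕ) (w : Equiv.Perm (Fin n)) :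
    ExteriorAlgebra ℚ (Fin n → ℚ) :=
  (List.ofFn fun t : Fin n => if (t : ℕ) < r then theta n (w t) else 1).prod

noncomputable def vandermondeTerm (n K : ℕ) (w : Equiv.Perm (Fin n)) : Ssp n :=
  MvPolynomial.monomial (vandermondeExponent n K w) 1 ⊗ₜ thetaWord n (n - K) w

theorem sVandermonde_eq_sum (n K : ℕ) :
    sVandermonde n K = ∑ w, ((sign w : ℤ) : ℚ) • vandermondeTerm n K w :=
  rfl

@[simp]
theorem vandermondeExponent_apply (n K : ℕ) (w : Equiv.Perm (Fin n)) (j : Fin n) :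
    vandermondeExponent n K w j = min (K - 1) (n - 1 - (w.symm j : ℕ)) :=
  rfl

theorem Dop_vandermondeTerm_of_apply_last_ne (n K : ℕ) {w : Equiv.Perm (Fin (n + 1))}
    (hw : w (Fin.last n) ≠ Fin.last n) : Dop n (vandermondeTerm (n + 1) K w) = 0 := by
  obtain ⟨i, hi⟩ := Fin.exists_castSucc_eq.mpr hw
  rw [vandermondeTerm, Dop_tmul_monomial, Finset.prod_eq_zero (Finset.mem_univ i) (by simp [hi]),
    zero_smul]

theorem vandermondeExponent_extendLast_sub (n K : ℕ) (σ : Equiv.Perm (Fin n)) :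
    vandermondeExponent (n + 1) (K + 1) (extendLast σ) - ∑ i : Fin n, Finsupp.single i.castSucc 1
      = Finsupp.mapDomain Fin.castSucc (vandermondeExponent n K σ) := by
  ext j
  induction j using Fin.lastCases with
  | last =>
    rw [Finsupp.mapDomain_of_notMem_range _ _ fun ⟨i, hi⟩ => (Fin.castSucc_lt_last i).ne hi]
    simp
  | cast j =>
    rw [Finsupp.mapDomain_apply (Fin.castSucc_injective n)]
    simp [Finsupp.single_apply]
    omega

theorem prod_vandermondeExponent_extendLast {n K : ℕ} (hK : K ≤ n) (σ : Equiv.Perm (Fin n)) :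
    ∏ i : Fin n, vandermondeExponent (n + 1) (K + 1) (extendLast σ) i.castSucc
      = K ^ (n - K) * K.factorial := by
  simp only [vandermondeExponent_apply, Equiv.Perm.extendLast_symm,
    Equiv.Perm.extendLast_castSucc, Fin.val_castSucc, Nat.add_sub_cancel]
  rw [Equiv.prod_comp σ.symm fun j => min K (n - j)]
  exact prod_fin_min_sub_eq_pow_mul_factorial hK

theorem thetaWord_extendLast {n r : ℕ} (hr : r ≤ n) (σ : Equiv.Perm (Fin n)) :
    thetaWord (n + 1) r (extendLast σ) = extInc n (thetaWord n r σ) := by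
  rw [thetaWord, thetaWord, List.ofFn_succ', List.prod_concat, map_list_prod, List.map_ofFn]
  simp [Function.comp_def, apply_ite (extInc n), extInc_theta, hr]

theorem Dop_vandermondeTerm_extendLast {n K : ℕ} (hK : K ≤ n) (σ : Equiv.Perm (Fin n)) :
    Dop n (vandermondeTerm (n + 1) (K + 1) (extendLast σ))
      = ((K ^ (n - K) * K.factorial : ℕ) : ℚ) • Psi n (vandermondeTerm n K σ) := by
  rw [vandermondeTerm, vandermondeTerm, Dop_tmul_monomial, vandermondeExponent_extendLast_sub,
    ← Nat.cast_prod, prod_vandermondeExponent_extendLast hK, Nat.add_sub_add_right,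
    thetaWord_extendLast (Nat.sub_le n K), Psi, TensorProduct.map_tmul, AlgHom.toLinearMap_apply,
    AlgHom.toLinearMap_apply, MvPolynomial.rename_monomial]

theorem Dop_sVandermonde_succ {n K : ℕ} (hK : K ≤ n) :
    Dop n (sVandermonde (n + 1) (K + 1))
      = ((K ^ (n - K) * K.factorial : ℕ) : ℚ) • Psi n (sVandermonde n K) := by
  rw [sVandermonde_eq_sum, sVandermonde_eq_sum, map_sum, map_sum, Finset.smul_sum]
  refine (Fintype.sum_of_injective extendLast Equiv.Perm.extendLast_injective _ _
    (fun w hw => ?_) (fun σ => ?_)).symm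
  · have hlast : w (Fin.last n) ≠ Fin.last n := fun h =>
      hw (Equiv.Perm.exists_extendLast_of_apply_last h)
    rw [map_smul, Dop_vandermondeTerm_of_apply_last_ne n _ hlast, smul_zero]
  · rw [map_smul, map_smul, Dop_vandermondeTerm_extendLast hK, Equiv.Perm.sign_extendLast,
      smul_comm]

end Vandermonde

theorem stmt16_general (n k : ℕ) (hk : k ≤ n - 1) :
    Dop n (sVandermonde (n + 1) (n - k + 1)) =
      (((n - k) ^ k * Nat.factorial (n - k) : ℕ) : ℚ) •
        Psi n (sVandermonde n (n - k)) := by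
  rw [Dop_sVandermonde_succ (Nat.sub_le n k), Nat.sub_sub_self (by omega)]

/-- for `n ≥ 1` and `0 ≤ k ≤ n - 1`, in `S(n+1)` we have
`(∂/∂x_1)(∂/∂x_2)⋯(∂/∂x_n) δ_{n+1, n-k+1} = (n-k)^k · (n-k)! · Ψ(δ_{n, n-k})`. -/
theorem stmt16 (n k : ℕ) (hn : 1 ≤ n) (hk : k ≤ n - 1) :
    Dop n (sVandermonde (n + 1) (n - k + 1)) =
      (((n - k) ^ k * Nat.factorial (n - k) : ℕ) : ℚ) •
        Psi n (sVandermonde n (n - k)) :=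
  stmt16_general n k hk
end
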